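/- arXiv:math/0411072 — 2 statements merged into one kernel-verified Lean document; each statement's English description precedes it below -/
import Mathlib

section
/- If m > 0 and r > 0, then every partition λ with r_{2,m}(λ) ≤ −r satisfies γ′₁ > 0, and both m-Durfee rectangles of λ have nonzero width, i.e. s_m(λ) > m and t_m(λ) > m. -/
namespace RR

/-- The `i`-th part (1-indexed) of a partition given as a list of parts;
`λ_i = 0` for `i` beyond the number of parts. -/
def part (l : List ℕ) (i : ℕ) : ℕ := l.getD (i - 1) 0

/-- `l` is a partition: a weakly decreasing list of positive integers. -/
def IsPartition (l : List ℕ) : Prop := l.Pairwise (· ≥ ·) ∧ ∀ x ∈ l, 0 < x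

/-- `l` is a partition of `n`. -/
def IsPartitionOf (n : ℕ) (l : List ℕ) : Prop := IsPartition l ∧ l.sum = n

/-- A Rogers-Ramanujan partition: the smallest part is at least the number of parts. -/
def IsRR (l : List ℕ) : Prop := ∀ x ∈ l, l.length ≤ x

/-- Height `s_m(λ)` of the first `m`-Durfee rectangle: the largest `h ≥ max(m,1)`
with `λ_h ≥ h - m`. -/
noncomputable def sD (m : ℕ) (l : List ℕ) : ℕ := sSup {h : ℕ | max m 1 ≤ h ∧ h - m ≤ part l h}

/-- Height `t_m(λ)` of the second `m`-Durfee rectangle: the largest `h ≥ max(m,1)`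
with `λ_{s+h} ≥ h - m`, where `s = s_m(λ)`. -/
noncomputable def tD (m : ℕ) (l : List ℕ) : ℕ :=
  sSup {h : ℕ | max m 1 ≤ h ∧ h - m ≤ part l (sD m l + h)}

/-- `γ′₁`: the number of indices `i ≥ 1` with `λ_{s+t+i} > 0`. -/
noncomputable def gamma1 (m : ℕ) (l : List ℕ) : ℕ :=
  {i : ℕ | 1 ≤ i ∧ 0 < part l (sD m l + tD m l + i)}.ncard

/-- The `(2,m)`-rank: `r_{2,m}(λ) = β₁ + α_{s-t-β₁+1} - γ′₁`, where
`β₁ = λ_{s+1} - (t - m)` and `α_i = λ_i - (s - m)`. -/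
noncomputable def rank2 (m : ℕ) (l : List ℕ) : ℤ :=
  let s := sD m l
  let t := tD m l
  let b1 := part l (s + 1) - (t - m)
  (b1 : ℤ) + ((part l (s - t - b1 + 1) : ℤ) - ((s - m : ℕ) : ℤ)) - (gamma1 m l : ℤ)

/-- `p n`: the number of partitions of `n`. -/
noncomputable def p (n : ℕ) : ℕ := {l : List ℕ | IsPartitionOf n l}.ncard

/-- `q n`: the number of Rogers-Ramanujan partitions of `n`. -/
noncomputable def q (n : ℕ) : ℕ := {l : List ℕ | IsPartitionOf n l ∧ IsRR l}.ncard

/-- The number of partitions of `n` whose `(2,m)`-rank satisfies the predicate `P`;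
for `m = 0` only non-Rogers-Ramanujan partitions are counted. -/
noncomputable def hC (n m : ℕ) (P : ℤ → Prop) : ℕ :=
  {l : List ℕ | IsPartitionOf n l ∧ (m = 0 → ¬ IsRR l) ∧ P (rank2 m l)}.ncard

/-- `p` extended to `ℤ` by `0` on negative integers. -/
noncomputable def pZ (k : ℤ) : ℤ := if 0 ≤ k then (p k.toNat : ℤ) else 0



private lemma part_anti {l : List ℕ} (hs : l.Pairwise (· ≥ ·)) {i j : ℕ} (h : i ≤ j) :
    part l j ≤ part l i := by
  unfold part
  rcases lt_or_ge (j - 1) l.length with hj | hj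
  · have hi : i - 1 < l.length := lt_of_le_of_lt (Nat.sub_le_sub_right h 1) hj
    rw [List.getD_eq_getElem l 0 hj, List.getD_eq_getElem l 0 hi]
    rcases eq_or_lt_of_le (Nat.sub_le_sub_right h 1) with he | hlt
    · simp [he]
    · exact List.pairwise_iff_getElem.mp hs _ _ hi hj hlt
  · rw [List.getD_eq_default l 0 hj]
    exact Nat.zero_le _

private lemma rank2_eq (m : ℕ) (l : List ℕ) :
    rank2 m l = ((part l (sD m l + 1) - (tD m l - m) : ℕ) : ℤ) +
      ((part l (sD m l - tD m l - (part l (sD m l + 1) - (tD m l - m)) + 1) : ℤ) -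
        ((sD m l - m : ℕ) : ℤ)) - (gamma1 m l : ℤ) := rfl

/-- If `m > 0` and `r > 0`, then every partition `λ` with
`r_{2,m}(λ) ≤ -r` satisfies `γ′₁ > 0`, and both `m`-Durfee rectangles of `λ` have
nonzero width, i.e. `s_m(λ) > m` and `t_m(λ) > m`. -/
theorem durfee_nonzero_width (m r : ℕ) (hm : 0 < m) (hr : 0 < r)
    (l : List ℕ) (hl : IsPartition l) (hrank : rank2 m l ≤ -(r : ℤ)) :
    0 < gamma1 m l ∧ m < sD m l ∧ m < tD m l := by
  obtain ⟨hsort, hpos⟩ := hl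
  set s := sD m l with hs_def
  set t := tD m l with ht_def
  -- S facts
  have hSne : m ∈ {h : ℕ | max m 1 ≤ h ∧ h - m ≤ part l h} := by
    constructor
    · omega
    · omega
  have hSbdd : BddAbove {h : ℕ | max m 1 ≤ h ∧ h - m ≤ part l h} := by
    refine ⟨m + part l 1, fun h hh => ?_⟩
    obtain ⟨h1, h2⟩ := hh
    have : part l h ≤ part l 1 := part_anti hsort (by omega)
    omega
  have hsS : s ∈ {h : ℕ | max m 1 ≤ h ∧ h - m ≤ part l h} :=
    Nat.sSup_mem ⟨m, hSne⟩ hSbdd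
  obtain ⟨hms, hspart⟩ := hsS
  have hsucc : ¬ (s + 1 ∈ {h : ℕ | max m 1 ≤ h ∧ h - m ≤ part l h}) := by
    intro hmem
    have h2 := le_csSup hSbdd hmem
    have heq : sSup {h : ℕ | max m 1 ≤ h ∧ h - m ≤ part l h} = s := rfl
    omega
  have hspart1 : part l (s + 1) ≤ s - m := by
    by_contra hc
    exact hsucc ⟨by omega, by omega⟩
  -- T facts
  have hTne : m ∈ {h : ℕ | max m 1 ≤ h ∧ h - m ≤ part l (s + h)} := ⟨by omega, by omega⟩
  have hTbdd : BddAbove {h : ℕ | max m 1 ≤ h ∧ h - m ≤ part l (s + h)} := by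
    refine ⟨m + part l 1, fun h hh => ?_⟩
    obtain ⟨h1, h2⟩ := hh
    have : part l (s + h) ≤ part l 1 := part_anti hsort (by omega)
    omega
  have htT : t ∈ {h : ℕ | max m 1 ≤ h ∧ h - m ≤ part l (s + h)} :=
    Nat.sSup_mem ⟨m, hTne⟩ hTbdd
  obtain ⟨hmt, htpart⟩ := htT
  have htsucc : ¬ (t + 1 ∈ {h : ℕ | max m 1 ≤ h ∧ h - m ≤ part l (s + h)}) := by
    intro hmem
    have h2 := le_csSup hTbdd hmem
    have heq : sSup {h : ℕ | max m 1 ≤ h ∧ h - m ≤ part l (s + h)} = t := rfl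
    omega
  have htpart1 : part l (s + t + 1) ≤ t - m := by
    by_contra hc
    refine htsucc ⟨by omega, ?_⟩
    have : s + (t + 1) = s + t + 1 := by omega
    rw [this]
    omega
  -- t ≤ s
  have hts : t ≤ s := by
    have h1 : part l (s + t) ≤ part l t := part_anti hsort (by omega)
    have hmem : t ∈ {h : ℕ | max m 1 ≤ h ∧ h - m ≤ part l h} := ⟨by omega, by omega⟩
    have h2 := le_csSup hSbdd hmem
    have heq : sSup {h : ℕ | max m 1 ≤ h ∧ h - m ≤ part l h} = s := rfl
    omega
  -- rank bound
  have hidx : s - t - (part l (s + 1) - (t - m)) + 1 ≤ s := by omega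
  have halpha : s - m ≤ part l (s - t - (part l (s + 1) - (t - m)) + 1) :=
    le_trans hspart (part_anti hsort hidx)
  have hγ : r ≤ gamma1 m l := by
    have hre := rank2_eq m l
    rw [← hs_def, ← ht_def] at hre
    rw [hre] at hrank
    omega
  refine ⟨by omega, ?_, ?_⟩
  · -- s > m
    have hne : {i : ℕ | 1 ≤ i ∧ 0 < part l (s + t + i)}.Nonempty := by
      apply Set.nonempty_of_ncard_ne_zero
      show gamma1 m l ≠ 0
      omega
    obtain ⟨i, hi1, hipos⟩ := hne
    have : part l (s + t + i) ≤ part l (s + 1) := part_anti hsort (by omega)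
    omega
  · -- t > m
    have hne : {i : ℕ | 1 ≤ i ∧ 0 < part l (s + t + i)}.Nonempty := by
      apply Set.nonempty_of_ncard_ne_zero
      show gamma1 m l ≠ 0
      omega
    obtain ⟨i, hi1, hipos⟩ := hne
    have : part l (s + t + i) ≤ part l (s + t + 1) := part_anti hsort (by omega)
    omega
end RR
end

section
/- For every natural number n, q(n) = Σ_{k=0}^∞ p_k(n − k²), where p_k(j) denotes the number of partitions of j into at most k parts (with p_0(0) = 1, p_k(j) = 0 for j < 0), and only finitely many terms are nonzero. -/
namespace RR

/-- `pAtMost k j`: the number of partitions of `j` into at most `k` parts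
(`0` when `j < 0`; the empty partition is the unique partition of `0`). -/
noncomputable def pAtMost (k : ℕ) (j : ℤ) : ℕ :=
  {l : List ℕ | IsPartition l ∧ (l.sum : ℤ) = j ∧ l.length ≤ k}.ncard

open List

lemma length_le_sum (l : List ℕ) (h : ∀ x ∈ l, 0 < x) : l.length ≤ l.sum := by
  induction l with
  | nil => simp
  | cons a t ih =>
    simp only [length_cons, sum_cons]
    have h1 := h a mem_cons_self
    have h2 := ih (fun x hx => h x (mem_cons_of_mem _ hx))
    omega

lemma sum_map_sub (k : ℕ) (l : List ℕ) (h : ∀ x ∈ l, k ≤ x) :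
    (l.map (· - k)).sum + l.length * k = l.sum := by
  induction l with
  | nil => simp
  | cons a t ih =>
    simp only [map_cons, sum_cons, length_cons]
    have h1 := h a mem_cons_self
    have h2 := ih (fun x hx => h x (mem_cons_of_mem _ hx))
    have h3 : (t.length + 1) * k = t.length * k + k := by ring
    omega

lemma sum_map_add (k : ℕ) (l : List ℕ) : (l.map (· + k)).sum = l.sum + l.length * k := by
  induction l with
  | nil => simp
  | cons a t ih => simp only [map_cons, sum_cons, length_cons, ih]; ring

lemma finite_partitions (m : ℕ) : {l : List ℕ | IsPartition l ∧ l.sum = m}.Finite := by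
  rw [← Set.finite_coe_iff]
  refine Finite.of_injective (fun l => (⟨(l.1 : Multiset ℕ), by
      intro i hi; exact l.2.1.2 i (by simpa using hi), by simpa using l.2.2⟩ : Nat.Partition m)) ?_
  intro l1 l2 h
  have : (l1.1 : Multiset ℕ) = (l2.1 : Multiset ℕ) := congrArg Nat.Partition.parts h
  exact Subtype.ext (Perm.eq_of_pairwise (fun a b _ _ h1 h2 => le_antisymm h2 h1) l1.2.1.1 l2.2.1.1 (Multiset.coe_eq_coe.mp this))

lemma dropWhile_all_eq (k : ℕ) (l : List ℕ) (hs : l.Pairwise (· ≥ ·)) (hb : ∀ x ∈ l, k ≤ x) :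
    ∀ x ∈ l.dropWhile (fun y => decide (k < y)), x = k := by
  induction l with
  | nil => simp
  | cons a t ih =>
    intro x hx
    rw [dropWhile_cons] at hx
    by_cases hk : k < a
    · simp [hk] at hx
      exact ih hs.of_cons (fun y hy => hb y (mem_cons_of_mem _ hy)) x hx
    · simp [hk] at hx
      rcases hx with rfl | hxt
      · exact le_antisymm (by omega) (hb x mem_cons_self)
      · have := rel_of_pairwise_cons hs hxt
        have := hb x (mem_cons_of_mem _ hxt)
        omega

def psi (k : ℕ) (m : List ℕ) : List ℕ := m.map (· + k) ++ List.replicate (k - m.length) k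
def setA (n k : ℕ) : Set (List ℕ) := {l | IsPartitionOf n l ∧ IsRR l ∧ l.length = k}
def setB (n k : ℕ) : Set (List ℕ) :=
  {l : List ℕ | IsPartition l ∧ (l.sum : ℤ) = (n : ℤ) - (k : ℤ) ^ 2 ∧ l.length ≤ k}

lemma cast_trick {s n k : ℕ} : ((s : ℤ) = (n : ℤ) - (k : ℤ) ^ 2) ↔ s + k * k = n := by
  have hK : ((k * k : ℕ) : ℤ) = (k : ℤ) ^ 2 := by push_cast; ring
  rw [← hK]; omega

lemma mem_setB_iff {n k : ℕ} {l : List ℕ} :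
    l ∈ setB n k ↔ IsPartition l ∧ l.sum + k * k = n ∧ l.length ≤ k := by
  unfold setB; rw [Set.mem_setOf_eq, cast_trick]

lemma psi_mapsTo {n k : ℕ} : Set.MapsTo (psi k) (setB n k) (setA n k) := by
  intro m hm
  obtain ⟨⟨hsort, hpos⟩, hsum, hlen⟩ := mem_setB_iff.mp hm
  have hlenpsi : (psi k m).length = k := by
    simp only [psi, length_append, length_map, length_replicate]; omega
  have hge : ∀ x ∈ psi k m, k ≤ x := by
    intro x hx
    rcases mem_append.mp hx with hx | hx
    · obtain ⟨y, hy, rfl⟩ := mem_map.mp hx; omega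
    · rw [eq_of_mem_replicate hx]
  refine ⟨⟨⟨?_, ?_⟩, ?_⟩, ?_, hlenpsi⟩
  · rw [psi]
    rw [pairwise_append]
    refine ⟨pairwise_map.mpr (hsort.imp (fun {a b} h => by omega)), ?_, ?_⟩
    · exact pairwise_replicate.mpr (Or.inr (le_refl k))
    · intro a ha b hb
      obtain ⟨y, hy, rfl⟩ := mem_map.mp ha
      have := hpos y hy
      rw [eq_of_mem_replicate hb]; omega
  · intro x hx
    rcases mem_append.mp hx with hx | hx
    · obtain ⟨y, hy, rfl⟩ := mem_map.mp hx; have := hpos y hy; omega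
    · obtain ⟨hne, rfl⟩ := mem_replicate.mp hx; omega
  · rw [psi, sum_append, sum_map_add, sum_replicate, smul_eq_mul]
    have h1 : (k - m.length) * k = k * k - m.length * k := by rw [Nat.sub_mul]
    have h2 : m.length * k ≤ k * k := Nat.mul_le_mul_right _ hlen
    set a := m.length * k; set b := k * k
    omega
  · intro x hx; rw [hlenpsi]; exact hge x hx

lemma psi_injOn {n k : ℕ} : Set.InjOn (psi k) (setB n k) := by
  have key : ∀ m ∈ setB n k, (psi k m).countP (fun x => decide (k < x)) = m.length := by
    intro m hm
    obtain ⟨⟨hsort, hpos⟩, hsum, hlen⟩ := mem_setB_iff.mp hm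
    rw [psi, countP_append]
    have c1 : (m.map (· + k)).countP (fun x => decide (k < x)) = (m.map (· + k)).length := by
      rw [countP_eq_length]
      intro a ha; obtain ⟨y, hy, rfl⟩ := mem_map.mp ha
      have := hpos y hy; simp; omega
    have c2 : (replicate (k - m.length) k).countP (fun x => decide (k < x)) = 0 := by
      rw [countP_eq_zero]
      intro a ha; rw [eq_of_mem_replicate ha]; simp
    rw [c1, c2, length_map]; omega
  intro m1 h1 m2 h2 heq
  have hl : m1.length = m2.length := by rw [← key m1 h1, ← key m2 h2, heq]
  have ht : m1.map (· + k) = m2.map (· + k) := by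
    have t1 : (psi k m1).take m1.length = m1.map (· + k) := by
      rw [psi, ← length_map (as := m1) (· + k)]; exact take_left
    have t2 : (psi k m2).take m2.length = m2.map (· + k) := by
      rw [psi, ← length_map (as := m2) (· + k)]; exact take_left
    rw [← t1, ← t2, heq, hl]
  exact map_injective_iff.mpr (add_left_injective k) ht

lemma psi_surjOn {n k : ℕ} : Set.SurjOn (psi k) (setB n k) (setA n k) := by
  intro l hl
  obtain ⟨⟨⟨hsort, hpos⟩, hsum⟩, hRR, hlen⟩ := hl
  have hbound : ∀ x ∈ l, k ≤ x := by intro x hx; have := hRR x hx; omega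
  set P : ℕ → Bool := fun y => decide (k < y) with hP
  set t := l.takeWhile P with hts
  set d := l.dropWhile P with hds
  have htd : t ++ d = l := takeWhile_append_dropWhile
  have hsorted_t : t.Pairwise (· ≥ ·) := hsort.sublist (takeWhile_sublist P)
  have hd_eq : ∀ x ∈ d, x = k := dropWhile_all_eq k l hsort hbound
  have hd_rep : d = replicate d.length k := eq_replicate_iff.mpr ⟨rfl, hd_eq⟩
  have hlen_td : t.length + d.length = k := by rw [← length_append, htd, hlen]
  have ht_mem : ∀ x ∈ t, k < x := fun x hx => by simpa [hP] using mem_takeWhile_imp hx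
  refine ⟨t.map (· - k), ?_, ?_⟩
  · rw [mem_setB_iff]
    refine ⟨⟨?_, ?_⟩, ?_, ?_⟩
    · exact pairwise_map.mpr (hsorted_t.imp (fun {a b} h => Nat.sub_le_sub_right h k))
    · intro x hx; obtain ⟨y, hy, rfl⟩ := mem_map.mp hx; have := ht_mem y hy; omega
    · have h1 : (t.map (· - k)).sum + t.length * k = t.sum :=
        sum_map_sub k t (fun x hx => le_of_lt (ht_mem x hx))
      have h2 : t.sum + d.sum = n := by rw [← sum_append, htd, hsum]
      have h3 : d.sum = d.length * k := by rw [hd_rep, sum_replicate, smul_eq_mul, length_replicate]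
      have h4 : t.length * k + d.length * k = k * k := by rw [← Nat.add_mul, hlen_td]
      linarith
    · rw [length_map]; omega
  · rw [psi, map_map]
    have hmm : t.map ((· + k) ∘ (· - k)) = t := by
      have := map_congr_left (l := t) (f := (· + k) ∘ (· - k)) (g := id)
        (fun x hx => by have := ht_mem x hx; simp; omega)
      rw [this, map_id]
    rw [hmm, length_map]
    have hkt : k - t.length = d.length := by omega
    rw [hkt, ← hd_rep, htd]

lemma ncard_setA (n k : ℕ) : (setA n k).ncard = pAtMost k ((n : ℤ) - (k : ℤ) ^ 2) := by
  have hb : Set.BijOn (psi k) (setB n k) (setA n k) := ⟨psi_mapsTo, psi_injOn, psi_surjOn⟩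
  have : pAtMost k ((n : ℤ) - (k : ℤ) ^ 2) = (setB n k).ncard := rfl
  rw [this, ← hb.image_eq, Set.ncard_image_of_injOn psi_injOn]

lemma pAtMost_vanish {n k : ℕ} (h : n < k) : pAtMost k ((n : ℤ) - (k : ℤ) ^ 2) = 0 := by
  have hempty : {l : List ℕ | IsPartition l ∧ (l.sum : ℤ) = (n : ℤ) - (k : ℤ) ^ 2 ∧ l.length ≤ k} = ∅ := by
    ext l
    simp only [Set.mem_empty_iff_false, iff_false, Set.mem_setOf_eq, not_and]
    intro _ h2
    exfalso
    have h1 : (1 : ℤ) ≤ (k : ℤ) := by exact_mod_cast Nat.one_le_iff_ne_zero.mpr (by omega)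
    have hk : (k : ℤ) ≤ (k : ℤ) ^ 2 := le_self_pow₀ h1 (by norm_num)
    have h0 : (0 : ℤ) ≤ (l.sum : ℤ) := Int.ofNat_nonneg _
    have hn : (n : ℤ) < (k : ℤ) := by exact_mod_cast h
    linarith
  rw [pAtMost, hempty, Set.ncard_empty]


/-- For every natural number `n`, `q(n) = Σ_{k=0}^∞ p_k(n - k²)`, where
`p_k(j)` is the number of partitions of `j` into at most `k` parts (`p_k(j) = 0` for
`j < 0`), and only finitely many terms are nonzero. -/
theorem q_eq_sum_durfee (n : ℕ) :
    q n = ∑ᶠ k : ℕ, pAtMost k ((n : ℤ) - (k : ℤ) ^ 2) := by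
  have hfin := finite_partitions n
  have hQ : {l : List ℕ | IsPartitionOf n l ∧ IsRR l}.Finite :=
    hfin.subset (fun l hl => ⟨hl.1.1, hl.1.2⟩)
  have hA : ∀ k, (setA n k).Finite := fun k => hfin.subset (fun l hl => ⟨hl.1.1, hl.1.2⟩)
  rw [finsum_eq_sum_of_support_subset _ (s := Finset.range (n+1)) ?hsupp]
  case hsupp =>
    intro k hk
    simp only [Function.mem_support, ne_eq] at hk
    simp only [Finset.coe_range, Set.mem_Iio]
    by_contra hc
    exact hk (pAtMost_vanish (by omega))
  have hQeq : hQ.toFinset = (Finset.range (n+1)).biUnion (fun k => (hA k).toFinset) := by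
    ext l
    simp only [Set.Finite.mem_toFinset, Finset.mem_biUnion, Finset.mem_range, Set.mem_setOf_eq]
    constructor
    · rintro ⟨hpo, hrr⟩
      refine ⟨l.length, ?_, ⟨hpo, hrr, rfl⟩⟩
      have h1 := length_le_sum l hpo.1.2
      have h2 := hpo.2
      omega
    · rintro ⟨k, -, h1, h2, -⟩; exact ⟨h1, h2⟩
  rw [q, Set.ncard_eq_toFinset_card _ hQ, hQeq, Finset.card_biUnion ?hdisj]
  case hdisj =>
    intro x _ y _ hxy
    rw [Function.onFun, Finset.disjoint_left]
    intro l hlx hly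
    simp only [Set.Finite.mem_toFinset] at hlx hly
    exact hxy (hlx.2.2.symm.trans hly.2.2)
  refine Finset.sum_congr rfl (fun k _ => ?_)
  rw [← Set.ncard_eq_toFinset_card _ (hA k), ncard_setA]
end RR
end
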